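/- arXiv:1410.8825 — 2 statements merged into one kernel-verified Lean document; each statement's English description precedes it below -/
import Mathlib

section
/- The Gagliardo–Nirenberg interpolation inequality: there is a constant C = C(N,p) such that for every u ∈ C_c^∞(R^N) and 1 ≤ p ≤ ∞, ‖∇u‖_{L^p(R^N)} ≤ C ‖∇²u‖_{L^p(R^N)}^{1/2} ‖u‖_{L^p(R^N)}^{1/2}. -/
open MeasureTheory
open scoped ENNReal NNReal


variable {E : Type*} [NormedAddCommGroup E] [InnerProductSpace ℝ E]

lemma taylor_aux (u : E → ℝ) (hu : ContDiff ℝ (⊤ : ℕ∞) u) (e x : E) (h : ℝ) :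
    u (x + h • e) - u x - h * fderiv ℝ u x e =
      ∫ t in (0:ℝ)..h, (h - t) * (fderiv ℝ (fun z => fderiv ℝ u z e) (x + t • e) e) := by
  have hdu : ContDiff ℝ (⊤ : ℕ∞) (fun z => fderiv ℝ u z e) := by
    exact (ContinuousLinearMap.apply ℝ ℝ e).contDiff.comp (hu.fderiv_right (by simp))
  -- line map
  have hline : ∀ t : ℝ, HasDerivAt (fun s : ℝ => x + s • e) e t := by
    intro t
    simpa using ((hasDerivAt_id t).smul_const e).const_add x
  set B : E → ℝ := fun z => fderiv ℝ (fun z => fderiv ℝ u z e) z e with hB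
  have hφ : ∀ t : ℝ, HasDerivAt
      (fun s : ℝ => u (x + s • e) + (h - s) * fderiv ℝ u (x + s • e) e)
      ((h - t) * B (x + t • e)) t := by
    intro t
    have h1 : HasDerivAt (fun s : ℝ => u (x + s • e)) (fderiv ℝ u (x + t • e) e) t :=
      (hu.differentiable (by simp) (x + t • e)).hasFDerivAt.comp_hasDerivAt t (hline t)
    have h2 : HasDerivAt (fun s : ℝ => fderiv ℝ u (x + s • e) e) (B (x + t • e)) t :=
      by have := (hdu.differentiable (by simp) (x + t • e)).hasFDerivAt.comp_hasDerivAt t (hline t); exact this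
    have h3 : HasDerivAt (fun s : ℝ => (h - s)) (-1) t := by
      simpa using ((hasDerivAt_id t).const_sub h)
    have h4 := (h3.mul h2)
    have := h1.add h4
    refine this.congr_deriv ?_
    ring
  have hcont : Continuous B := (hdu.continuous_fderiv (by simp)).clm_apply continuous_const
  have hint : IntervalIntegrable (fun t : ℝ => (h - t) * B (x + t • e)) volume 0 h := by
    apply Continuous.intervalIntegrable
    fun_prop
  have := intervalIntegral.integral_eq_sub_of_hasDerivAt (fun t _ => hφ t) hint
  rw [this]
  simp
  ring

variable {N : ℕ}
local notation "𝔼" => EuclideanSpace ℝ (Fin N)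

lemma cont_le_essSup (g : 𝔼 → ℝ) (hg : Continuous g) (x : 𝔼) :
    (‖g x‖₊ : ℝ≥0∞) ≤ eLpNormEssSup g volume := by
  by_contra hlt
  push_neg at hlt
  obtain ⟨c, hc1, hc2⟩ := exists_between hlt
  have hopen : IsOpen {y : 𝔼 | c < (‖g y‖₊ : ℝ≥0∞)} := by
    have : Continuous fun y : 𝔼 => (‖g y‖₊ : ℝ≥0∞) := ENNReal.continuous_coe.comp hg.nnnorm
    exact isOpen_lt continuous_const this
  have hpos : 0 < volume {y : 𝔼 | c < (‖g y‖₊ : ℝ≥0∞)} :=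
    hopen.measure_pos volume ⟨x, hc2⟩
  have hae := ae_le_eLpNormEssSup (f := g) (μ := volume)
  have : volume {y : 𝔼 | c < (‖g y‖₊ : ℝ≥0∞)} = 0 := by
    refine measure_mono_null ?_ (ae_iff.mp hae)
    intro y hy
    simp only [Set.mem_setOf_eq] at hy ⊢
    exact fun hle => absurd (lt_of_lt_of_le hy hle) (not_lt.mpr hc1.le)
  simp [this] at hpos

lemma jensen_aux (ν : Measure ℝ) [SFinite ν] (f : ℝ → ℝ≥0∞) (hf : AEMeasurable f ν)
    (r : ℝ) (hr : 1 ≤ r) :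
    (∫⁻ t, f t ∂ν) ^ r ≤ (ν Set.univ) ^ (r - 1) * ∫⁻ t, (f t) ^ r ∂ν := by
  rcases eq_or_lt_of_le hr with hr1 | hr1
  · simp [← hr1]
  · set q := Real.conjExponent r with hq
    have hpq : r.HolderConjugate q := Real.HolderConjugate.conjExponent hr1
    have hr0 : r ≠ 0 := by positivity
    have key : ∫⁻ t, f t ∂ν ≤ (∫⁻ t, (f t) ^ r ∂ν) ^ (1 / r) * (ν Set.univ) ^ (1 / q) := by
      have := ENNReal.lintegral_mul_le_Lp_mul_Lq ν hpq hf aemeasurable_const (g := fun _ => 1)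
      simpa using this
    calc (∫⁻ t, f t ∂ν) ^ r
        ≤ ((∫⁻ t, (f t) ^ r ∂ν) ^ (1 / r) * (ν Set.univ) ^ (1 / q)) ^ r :=
          ENNReal.rpow_le_rpow key (by positivity)
      _ = (∫⁻ t, (f t) ^ r ∂ν) * (ν Set.univ) ^ (r / q) := by
          rw [ENNReal.mul_rpow_of_nonneg _ _ (by positivity), ← ENNReal.rpow_mul,
            ← ENNReal.rpow_mul, one_div_mul_cancel hr0, ENNReal.rpow_one]
          ring_nf
      _ = (ν Set.univ) ^ (r - 1) * ∫⁻ t, (f t) ^ r ∂ν := by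
          rw [mul_comm]
          congr 1
          congr 1
          rw [hq, Real.conjExponent]
          have : r - 1 ≠ 0 := by linarith
          field_simp

lemma minkowski_aux (p : ℝ≥0∞) (hp : 1 ≤ p) (g : 𝔼 → ℝ) (hg : Continuous g)
    (hg0 : ∀ y, 0 ≤ g y) (e : 𝔼) (h : ℝ) (hh : 0 < h) :
    eLpNorm (fun x => ∫ t in (0:ℝ)..h, g (x + t • e)) p volume
      ≤ ENNReal.ofReal h * eLpNorm g p volume := by
  set S : 𝔼 → ℝ := fun x => ∫ t in (0:ℝ)..h, g (x + t • e) with hS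
  have hint : ∀ x : 𝔼, IntegrableOn (fun t : ℝ => g (x + t • e)) (Set.Ioc 0 h) volume := by
    intro x
    apply Continuous.integrableOn_Ioc
    fun_prop
  have hS0 : ∀ x, 0 ≤ S x := by
    intro x
    rw [hS]
    apply intervalIntegral.integral_nonneg hh.le
    intro t _
    exact hg0 _
  rcases eq_or_ne p ∞ with hptop | hptop
  · -- p = ∞ case
    subst hptop
    rw [eLpNorm_exponent_top, eLpNorm_exponent_top]
    rcases eq_or_ne (eLpNormEssSup g volume) ∞ with hM | hM
    · rw [hM, ENNReal.mul_top (by simpa using (ENNReal.ofReal_pos.mpr hh).ne')]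
      exact le_top
    · set M := (eLpNormEssSup g volume).toReal with hMdef
      have hM0 : 0 ≤ M := ENNReal.toReal_nonneg
      have hgM : ∀ y, g y ≤ M := by
        intro y
        have h1 := cont_le_essSup g hg y
        have h2 : (‖g y‖₊ : ℝ≥0∞).toReal ≤ M := ENNReal.toReal_mono hM h1
        simp only [coe_nnnorm, ENNReal.coe_toReal] at h2
        calc g y ≤ |g y| := le_abs_self _
          _ = ‖g y‖ := rfl
          _ ≤ M := by simpa using h2
      have hSb : ∀ x, S x ≤ h * M := by
        intro x
        rw [hS]
        calc (∫ t in (0:ℝ)..h, g (x + t • e))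
            ≤ ∫ t in (0:ℝ)..h, M := by
              apply intervalIntegral.integral_mono_on hh.le _ (by simp) fun t _ => hgM _
              rw [intervalIntegrable_iff_integrableOn_Ioc_of_le hh.le]
              exact hint x
          _ = h * M := by simp
      have hbound : eLpNormEssSup S volume ≤ ENNReal.ofReal (h * M) := by
        refine essSup_le_of_ae_le _ ?_
        apply Filter.Eventually.of_forall
        intro x
        show (‖S x‖₊ : ℝ≥0∞) ≤ ENNReal.ofReal (h * M)
        rw [← enorm_eq_nnnorm, ← ofReal_norm, Real.norm_of_nonneg (hS0 x)]
        exact ENNReal.ofReal_le_ofReal (hSb x)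
      refine hbound.trans (le_of_eq ?_)
      rw [ENNReal.ofReal_mul hh.le, hMdef, ENNReal.ofReal_toReal hM]
  · -- p < ∞ case
    have hp0 : p ≠ 0 := by positivity
    set r := p.toReal with hrdef
    have hr1 : 1 ≤ r := by simpa using ENNReal.toReal_mono hptop hp
    have hr0 : 0 < r := lt_of_lt_of_le one_pos hr1
    set ν : Measure ℝ := volume.restrict (Set.Ioc 0 h) with hν
    have hνuniv : ν Set.univ = ENNReal.ofReal h := by
      rw [hν, Measure.restrict_apply_univ, Real.volume_Ioc, sub_zero]
    -- pointwise bound on enorm of S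
    have hSb : ∀ x : 𝔼, (‖S x‖₊ : ℝ≥0∞) ≤ ∫⁻ t, (‖g (x + t • e)‖₊ : ℝ≥0∞) ∂ν := by
      intro x
      show (‖∫ t in (0:ℝ)..h, g (x + t • e)‖₊ : ℝ≥0∞) ≤ _
      rw [intervalIntegral.integral_of_le hh.le]
      exact enorm_integral_le_lintegral_enorm _
    have hGmeas : Measurable fun q : 𝔼 × ℝ => (‖g (q.1 + q.2 • e)‖₊ : ℝ≥0∞) := by
      apply Measurable.coe_nnreal_ennreal
      apply Measurable.nnnorm
      fun_prop
    rw [eLpNorm_eq_lintegral_rpow_enorm_toReal hp0 hptop, ← hrdef,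
        eLpNorm_eq_lintegral_rpow_enorm_toReal hp0 hptop, ← hrdef]
    have key : (∫⁻ x, (‖S x‖₊ : ℝ≥0∞) ^ r ∂volume)
        ≤ (ENNReal.ofReal h) ^ r * ∫⁻ x, (‖g x‖₊ : ℝ≥0∞) ^ r ∂volume := by
      calc ∫⁻ x, (‖S x‖₊ : ℝ≥0∞) ^ r ∂volume
          ≤ ∫⁻ x, (∫⁻ t, (‖g (x + t • e)‖₊ : ℝ≥0∞) ∂ν) ^ r ∂volume := by
            apply lintegral_mono fun x => ENNReal.rpow_le_rpow (hSb x) hr0.le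
        _ ≤ ∫⁻ x, (ENNReal.ofReal h) ^ (r - 1)
              * ∫⁻ t, (‖g (x + t • e)‖₊ : ℝ≥0∞) ^ r ∂ν ∂volume := by
            apply lintegral_mono fun x => ?_
            have := jensen_aux ν (fun t => (‖g (x + t • e)‖₊ : ℝ≥0∞))
              (by exact (hGmeas.comp (measurable_const.prodMk measurable_id)).aemeasurable) r hr1
            rwa [hνuniv] at this
        _ = (ENNReal.ofReal h) ^ (r - 1)
              * ∫⁻ x, ∫⁻ t, (‖g (x + t • e)‖₊ : ℝ≥0∞) ^ r ∂ν ∂volume := by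
            rw [lintegral_const_mul]
            apply Measurable.lintegral_prod_right
            exact (hGmeas.pow_const r)
        _ = (ENNReal.ofReal h) ^ (r - 1)
              * ∫⁻ t, ∫⁻ x, (‖g (x + t • e)‖₊ : ℝ≥0∞) ^ r ∂volume ∂ν := by
            congr 1
            apply lintegral_lintegral_swap
            exact ((hGmeas.pow_const r).aemeasurable)
        _ = (ENNReal.ofReal h) ^ (r - 1)
              * ∫⁻ _t, (∫⁻ x, (‖g x‖₊ : ℝ≥0∞) ^ r ∂volume) ∂ν := by
            congr 1
            apply lintegral_congr fun t => ?_
            exact lintegral_add_right_eq_self (fun y => (‖g y‖₊ : ℝ≥0∞) ^ r) (t • e)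
        _ = (ENNReal.ofReal h) ^ r * ∫⁻ x, (‖g x‖₊ : ℝ≥0∞) ^ r ∂volume := by
            rw [lintegral_const, hνuniv]
            have hsplit : (ENNReal.ofReal h) ^ r
                = (ENNReal.ofReal h) ^ (r - 1) * (ENNReal.ofReal h) ^ (1 : ℝ) := by
              rw [← ENNReal.rpow_add_of_nonneg _ _ (by linarith) zero_le_one]
              norm_num
            rw [hsplit, ENNReal.rpow_one]
            ring
    calc (∫⁻ x, (‖S x‖₊ : ℝ≥0∞) ^ r ∂volume) ^ (1 / r)
        ≤ ((ENNReal.ofReal h) ^ r * ∫⁻ x, (‖g x‖₊ : ℝ≥0∞) ^ r ∂volume) ^ (1 / r) :=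
          ENNReal.rpow_le_rpow key (by positivity)
      _ = ENNReal.ofReal h * (∫⁻ x, (‖g x‖₊ : ℝ≥0∞) ^ r ∂volume) ^ (1 / r) := by
          rw [ENNReal.mul_rpow_of_nonneg _ _ (by positivity), ← ENNReal.rpow_mul,
            mul_one_div, div_self hr0.ne', ENNReal.rpow_one]

lemma directional_bound (p : ℝ≥0∞) (hp : 1 ≤ p) (u : 𝔼 → ℝ) (hu : ContDiff ℝ (⊤ : ℕ∞) u)
    (e : 𝔼) (he : ‖e‖ = 1) (h : ℝ) (hh : 0 < h) :
    eLpNorm (fun x => fderiv ℝ u x e) p volume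
      ≤ ENNReal.ofReal (2 / h) * eLpNorm u p volume
        + ENNReal.ofReal h * eLpNorm (fun x => ‖iteratedFDeriv ℝ 2 u x‖) p volume := by
  set G₀ : 𝔼 → ℝ := fun y => ‖iteratedFDeriv ℝ 2 u y‖ with hG₀
  have hG₀cont : Continuous G₀ := (hu.continuous_iteratedFDeriv (m := 2) (WithTop.coe_le_coe.mpr le_top)).norm
  have hG₀0 : ∀ y, 0 ≤ G₀ y := fun y => norm_nonneg _
  have hucont : Continuous u := hu.continuous
  have hdu : ContDiff ℝ (⊤ : ℕ∞) (fun z => fderiv ℝ u z e) :=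
    (ContinuousLinearMap.apply ℝ ℝ e).contDiff.comp (hu.fderiv_right (by simp))
  have hB : ∀ y : 𝔼, |fderiv ℝ (fun z => fderiv ℝ u z e) y e| ≤ G₀ y := by
    intro y
    have h1 : fderiv ℝ (fun z => fderiv ℝ u z e) y e = fderiv ℝ (fderiv ℝ u) y e e := by
      rw [fderiv_clm_apply ((hu.fderiv_right (m := 1) (WithTop.coe_le_coe.mpr le_top)).differentiable (by simp)).differentiableAt
        (differentiableAt_const e)]
      simp
    have h2 : fderiv ℝ (fderiv ℝ u) y e e = iteratedFDeriv ℝ 2 u y ![e, e] := by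
      rw [iteratedFDeriv_two_apply]
      simp
    rw [h1, h2]
    calc |iteratedFDeriv ℝ 2 u y ![e, e]| = ‖iteratedFDeriv ℝ 2 u y ![e, e]‖ := rfl
      _ ≤ ‖iteratedFDeriv ℝ 2 u y‖ * ∏ i : Fin 2, ‖(![e, e] : Fin 2 → 𝔼) i‖ :=
          (iteratedFDeriv ℝ 2 u y).le_opNorm _
      _ = G₀ y := by rw [hG₀]; simp [Fin.prod_univ_two, he]
  set S : 𝔼 → ℝ := fun x => ∫ t in (0:ℝ)..h, G₀ (x + t • e) with hSdef
  have hpoint : ∀ x : 𝔼, |fderiv ℝ u x e|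
      ≤ (1 / h) * |u (x + h • e)| + (1 / h) * |u x| + S x := by
    intro x
    have hT := taylor_aux u hu e x h
    have hIb : |∫ t in (0:ℝ)..h, (h - t) * (fderiv ℝ (fun z => fderiv ℝ u z e) (x + t • e) e)|
        ≤ h * S x := by
      have hcontB : Continuous fun t : ℝ =>
          (h - t) * (fderiv ℝ (fun z => fderiv ℝ u z e) (x + t • e) e) := by
        have : Continuous fun z : 𝔼 => fderiv ℝ (fun z => fderiv ℝ u z e) z e :=
          (hdu.continuous_fderiv (by simp)).clm_apply continuous_const
        fun_prop
      calc |∫ t in (0:ℝ)..h, (h - t) * (fderiv ℝ (fun z => fderiv ℝ u z e) (x + t • e) e)|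
          ≤ ∫ t in (0:ℝ)..h, |(h - t) * (fderiv ℝ (fun z => fderiv ℝ u z e) (x + t • e) e)| :=
            intervalIntegral.abs_integral_le_integral_abs hh.le
        _ ≤ ∫ t in (0:ℝ)..h, h * G₀ (x + t • e) := by
            apply intervalIntegral.integral_mono_on hh.le
            · exact (hcontB.abs).intervalIntegrable _ _
            · apply Continuous.intervalIntegrable
              fun_prop
            · intro t ht
              rw [Set.mem_Icc] at ht
              rw [abs_mul]
              have hby := hB (x + t • e)
              have h1 : |h - t| ≤ h := by
                rw [abs_of_nonneg (by linarith [ht.2])]; linarith [ht.1]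
              exact mul_le_mul h1 hby (abs_nonneg _) hh.le
        _ = h * S x := by rw [hSdef]; simp [intervalIntegral.integral_const_mul]
    have key : h * |fderiv ℝ u x e| ≤ |u (x + h • e)| + |u x| + h * S x := by
      have h0 : h * fderiv ℝ u x e = u (x + h • e) - u x
          - ∫ t in (0:ℝ)..h, (h - t) * (fderiv ℝ (fun z => fderiv ℝ u z e) (x + t • e) e) := by
        linarith [hT]
      calc h * |fderiv ℝ u x e| = |h * fderiv ℝ u x e| := by
            rw [abs_mul, abs_of_nonneg hh.le]
        _ ≤ |u (x + h • e)| + |u x|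
            + |∫ t in (0:ℝ)..h, (h - t) * (fderiv ℝ (fun z => fderiv ℝ u z e) (x + t • e) e)| := by
            rw [h0]
            exact (abs_sub _ _).trans (by gcongr; exact abs_sub _ _)
        _ ≤ |u (x + h • e)| + |u x| + h * S x := by linarith [hIb]
    calc |fderiv ℝ u x e| = (h * |fderiv ℝ u x e|) / h := by field_simp
      _ ≤ (|u (x + h • e)| + |u x| + h * S x) / h := by
          exact div_le_div_of_nonneg_right key hh.le |>.trans_eq rfl
      _ = (1 / h) * |u (x + h • e)| + (1 / h) * |u x| + S x := by field_simp
  -- measurability of the three pieces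
  have hmp : MeasurePreserving (fun x : 𝔼 => x + h • e) volume volume :=
    measurePreserving_add_right volume (h • e)
  have hf1m : AEStronglyMeasurable (fun x : 𝔼 => (1 / h) * |u (x + h • e)|) volume := by
    apply Continuous.aestronglyMeasurable
    fun_prop
  have hf2m : AEStronglyMeasurable (fun x : 𝔼 => (1 / h) * |u x|) volume := by
    apply Continuous.aestronglyMeasurable
    fun_prop
  have hSm : AEStronglyMeasurable S volume := by
    rw [hSdef]
    have : ∀ x : 𝔼, (∫ t in (0:ℝ)..h, G₀ (x + t • e))
        = ∫ t in Set.Ioc (0:ℝ) h, G₀ (x + t • e) := fun x =>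
      intervalIntegral.integral_of_le hh.le
    simp only [this]
    apply StronglyMeasurable.aestronglyMeasurable
    apply MeasureTheory.StronglyMeasurable.integral_prod_right' (ν := volume.restrict (Set.Ioc 0 h))
      (f := fun q : 𝔼 × ℝ => G₀ (q.1 + q.2 • e))
    apply Continuous.stronglyMeasurable
    fun_prop
  -- assemble
  have hmono : eLpNorm (fun x => fderiv ℝ u x e) p volume
      ≤ eLpNorm (fun x => (1 / h) * |u (x + h • e)| + ((1 / h) * |u x| + S x)) p volume := by
    apply eLpNorm_mono_real
    intro x
    rw [Real.norm_eq_abs]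
    calc |fderiv ℝ u x e| ≤ (1 / h) * |u (x + h • e)| + (1 / h) * |u x| + S x := hpoint x
      _ = (1 / h) * |u (x + h • e)| + ((1 / h) * |u x| + S x) := by ring
  have htri : eLpNorm (fun x => (1 / h) * |u (x + h • e)| + ((1 / h) * |u x| + S x)) p volume
      ≤ eLpNorm (fun x : 𝔼 => (1 / h) * |u (x + h • e)|) p volume
        + (eLpNorm (fun x : 𝔼 => (1 / h) * |u x|) p volume + eLpNorm S p volume) := by
    refine (eLpNorm_add_le hf1m (hf2m.add hSm) hp).trans ?_
    gcongr
    exact eLpNorm_add_le hf2m hSm hp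
  have e1 : eLpNorm (fun x : 𝔼 => (1 / h) * |u (x + h • e)|) p volume
      = ENNReal.ofReal (1 / h) * eLpNorm u p volume := by
    have habs : eLpNorm (fun x : 𝔼 => (1 / h) * |u (x + h • e)|) p volume
        = eLpNorm ((1 / h) • fun x : 𝔼 => u (x + h • e)) p volume := by
      apply eLpNorm_congr_norm_ae
      apply Filter.Eventually.of_forall
      intro x
      simp [abs_mul, abs_abs, Real.norm_eq_abs]
    rw [habs, eLpNorm_const_smul]
    congr 1
    · rw [← ofReal_norm, Real.norm_of_nonneg (by positivity)]
    · exact eLpNorm_comp_measurePreserving hucont.aestronglyMeasurable hmp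
  have e2 : eLpNorm (fun x : 𝔼 => (1 / h) * |u x|) p volume
      = ENNReal.ofReal (1 / h) * eLpNorm u p volume := by
    have habs : eLpNorm (fun x : 𝔼 => (1 / h) * |u x|) p volume
        = eLpNorm ((1 / h) • fun x : 𝔼 => u x) p volume := by
      apply eLpNorm_congr_norm_ae
      apply Filter.Eventually.of_forall
      intro x
      simp [abs_mul, abs_abs, Real.norm_eq_abs]
    rw [habs, eLpNorm_const_smul]
    congr 1
    rw [← ofReal_norm, Real.norm_of_nonneg (by positivity)]
  have e3 : eLpNorm S p volume ≤ ENNReal.ofReal h * eLpNorm G₀ p volume :=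
    minkowski_aux p hp G₀ hG₀cont hG₀0 e h hh
  calc eLpNorm (fun x => fderiv ℝ u x e) p volume
      ≤ ENNReal.ofReal (1 / h) * eLpNorm u p volume
        + (ENNReal.ofReal (1 / h) * eLpNorm u p volume
          + ENNReal.ofReal h * eLpNorm G₀ p volume) := by
        refine hmono.trans (htri.trans ?_)
        rw [e1, e2]
        gcongr
    _ = ENNReal.ofReal (2 / h) * eLpNorm u p volume
        + ENNReal.ofReal h * eLpNorm G₀ p volume := by
        rw [← add_assoc, ← add_mul, ← ENNReal.ofReal_add (by positivity) (by positivity)]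
        have h2 : 1 / h + 1 / h = 2 / h := by ring
        rw [h2]

lemma optimize_aux {A B D : ℝ≥0∞} (hB : B ≠ ∞) (hD : D ≠ ∞)
    (hbound : ∀ h : ℝ, 0 < h → A ≤ ENNReal.ofReal (2 / h) * B + ENNReal.ofReal h * D) :
    A ≤ 3 * D ^ ((1:ℝ)/2) * B ^ ((1:ℝ)/2) := by
  rcases eq_or_ne D 0 with hD0 | hD0
  · -- D = 0 : let h → ∞
    have hA : A ≤ 0 := by
      have hb : ∀ n : ℕ, A ≤ ENNReal.ofReal (2 / (n + 1)) * B := by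
        intro n
        have := hbound (n + 1) (by positivity)
        simpa [hD0] using this
      have htend : Filter.Tendsto (fun n : ℕ => ENNReal.ofReal (2 / (n + 1)) * B)
          Filter.atTop (nhds 0) := by
        have h1 : Filter.Tendsto (fun n : ℕ => (2 : ℝ) / (n + 1)) Filter.atTop (nhds 0) := by
          have := (tendsto_const_div_atTop_nhds_zero_nat (2:ℝ)).comp (Filter.tendsto_add_atTop_nat 1)
          simpa [Function.comp_def] using this
        have h2 : Filter.Tendsto (fun n : ℕ => ENNReal.ofReal ((2 : ℝ) / (n + 1)))
            Filter.atTop (nhds 0) := by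
          have := (ENNReal.continuous_ofReal.tendsto 0).comp h1
          simpa [Function.comp_def] using this
        have := ENNReal.Tendsto.mul_const h2 (Or.inr hB)
        simpa using this
      exact ge_of_tendsto' htend hb |>.trans_eq rfl |>.trans (le_refl _) |>.trans (by simp)
    simp only [le_zero_iff] at hA
    simp [hA]
  rcases eq_or_ne B 0 with hB0 | hB0
  · -- B = 0 : let h → 0
    have hA : A ≤ 0 := by
      have hb : ∀ n : ℕ, A ≤ ENNReal.ofReal (1 / (n + 1)) * D := by
        intro n
        have := hbound (1 / (n + 1)) (by positivity)
        simpa [hB0] using this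
      have htend : Filter.Tendsto (fun n : ℕ => ENNReal.ofReal (1 / ((n : ℝ) + 1)) * D)
          Filter.atTop (nhds 0) := by
        have h1 : Filter.Tendsto (fun n : ℕ => (1 : ℝ) / (n + 1)) Filter.atTop (nhds 0) := by
          have := (tendsto_const_div_atTop_nhds_zero_nat (1:ℝ)).comp (Filter.tendsto_add_atTop_nat 1)
          simpa [Function.comp_def] using this
        have h2 : Filter.Tendsto (fun n : ℕ => ENNReal.ofReal ((1 : ℝ) / (n + 1)))
            Filter.atTop (nhds 0) := by
          have := (ENNReal.continuous_ofReal.tendsto 0).comp h1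
          simpa [Function.comp_def] using this
        have := ENNReal.Tendsto.mul_const h2 (Or.inr hD)
        simpa using this
      exact ge_of_tendsto' htend hb |>.trans (by simp)
    simp only [le_zero_iff] at hA
    simp [hA]
  · -- main case
    set b := B.toReal with hbdef
    set d := D.toReal with hddef
    have hbpos : 0 < b := ENNReal.toReal_pos hB0 hB
    have hdpos : 0 < d := ENNReal.toReal_pos hD0 hD
    set sb := Real.sqrt b with hsb
    set sd := Real.sqrt d with hsd
    have hsbpos : 0 < sb := Real.sqrt_pos.mpr hbpos
    have hsdpos : 0 < sd := Real.sqrt_pos.mpr hdpos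
    have hsb2 : sb ^ 2 = b := Real.sq_sqrt hbpos.le
    have hsd2 : sd ^ 2 = d := Real.sq_sqrt hdpos.le
    set h := sb / sd with hh
    have hhpos : 0 < h := by positivity
    have key := hbound h hhpos
    have hBr : B = ENNReal.ofReal b := (ENNReal.ofReal_toReal hB).symm
    have hDr : D = ENNReal.ofReal d := (ENNReal.ofReal_toReal hD).symm
    have hcalc : ENNReal.ofReal (2 / h) * B + ENNReal.ofReal h * D
        = ENNReal.ofReal (3 * (sb * sd)) := by
      rw [hBr, hDr, ← ENNReal.ofReal_mul (by positivity), ← ENNReal.ofReal_mul (by positivity),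
        ← ENNReal.ofReal_add (by positivity) (by positivity)]
      congr 1
      rw [hh]
      field_simp
      nlinarith [hsb2, hsd2, hsbpos, hsdpos]
    have hrhs : (3 : ℝ≥0∞) * D ^ ((1:ℝ)/2) * B ^ ((1:ℝ)/2) = ENNReal.ofReal (3 * (sb * sd)) := by
      rw [hBr, hDr, ENNReal.ofReal_rpow_of_nonneg hdpos.le (by norm_num),
        ENNReal.ofReal_rpow_of_nonneg hbpos.le (by norm_num)]
      rw [show ((3:ℝ≥0∞)) = ENNReal.ofReal 3 by simp [ENNReal.ofReal_ofNat],
        ← ENNReal.ofReal_mul (by norm_num), ← ENNReal.ofReal_mul (by positivity)]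
      congr 1
      rw [← Real.sqrt_eq_rpow, ← Real.sqrt_eq_rpow, ← hsb, ← hsd]
      ring
    rw [hrhs]
    rw [hcalc] at key
    exact key


set_option maxHeartbeats 1000000 in
/-- Gagliardo–Nirenberg interpolation inequality: there is a constant `C = C(N, p)` such
that for every `u ∈ C_c^∞(ℝ^N)` and `1 ≤ p ≤ ∞`,
`‖∇u‖_{L^p} ≤ C ‖∇²u‖_{L^p}^{1/2} ‖u‖_{L^p}^{1/2}`. -/
theorem gagliardo_nirenberg_interpolation (N : ℕ) (p : ℝ≥0∞) (hp : 1 ≤ p) :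
    ∃ C : ℝ≥0, ∀ u : EuclideanSpace ℝ (Fin N) → ℝ,
      ContDiff ℝ (⊤ : ℕ∞) u → HasCompactSupport u →
      eLpNorm (fun x => fderiv ℝ u x) p volume
        ≤ C * (eLpNorm (fun x => iteratedFDeriv ℝ 2 u x) p volume) ^ ((1 : ℝ) / 2)
            * (eLpNorm u p volume) ^ ((1 : ℝ) / 2) := by
  refine ⟨3 * N, fun u hu hcs => ?_⟩
  set B := eLpNorm u p volume with hBdef
  set D := eLpNorm (fun x => iteratedFDeriv ℝ 2 u x) p volume with hDdef
  have hBfin : B ≠ ∞ :=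
    (hu.continuous.memLp_of_hasCompactSupport hcs).eLpNorm_lt_top.ne
  have hDnorm : eLpNorm (fun x => ‖iteratedFDeriv ℝ 2 u x‖) p volume = D := by
    rw [hDdef]; exact eLpNorm_norm _
  have hDfin : D ≠ ∞ :=
    (((hu.continuous_iteratedFDeriv (m := 2) (WithTop.coe_le_coe.mpr le_top)).memLp_of_hasCompactSupport
      (hcs.iteratedFDeriv 2)).eLpNorm_lt_top).ne
  have hdir : ∀ i : Fin N,
      eLpNorm (fun x => fderiv ℝ u x (EuclideanSpace.single i 1)) p volume
        ≤ 3 * D ^ ((1:ℝ)/2) * B ^ ((1:ℝ)/2) := by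
    intro i
    have hnorm1 : ‖(EuclideanSpace.single i 1 : EuclideanSpace ℝ (Fin N))‖ = 1 := by
      rw [EuclideanSpace.norm_single]; simp
    have := optimize_aux (A := eLpNorm (fun x => fderiv ℝ u x (EuclideanSpace.single i 1)) p volume)
      hBfin (hDnorm ▸ hDfin) (fun h hh =>
        directional_bound p hp u hu (EuclideanSpace.single i 1) hnorm1 h hh)
    rwa [hDnorm] at this
  have hpt : ∀ x : EuclideanSpace ℝ (Fin N), ‖fderiv ℝ u x‖
      ≤ ∑ i : Fin N, |fderiv ℝ u x (EuclideanSpace.single i 1)| := by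
    intro x
    apply ContinuousLinearMap.opNorm_le_bound _
      (Finset.sum_nonneg fun i _ => abs_nonneg _)
    intro v
    have hv : v = ∑ i : Fin N, v i • (EuclideanSpace.single i 1 : EuclideanSpace ℝ (Fin N)) := by
      have := (EuclideanSpace.basisFun (Fin N) ℝ).sum_repr v
      simp only [EuclideanSpace.basisFun_apply, EuclideanSpace.basisFun_repr] at this
      exact this.symm
    have hvi : ∀ i : Fin N, |v i| ≤ ‖v‖ := by
      intro i
      have h1 : v i = inner ℝ (EuclideanSpace.single i (1:ℝ)) v := by
        rw [EuclideanSpace.inner_single_left]; simp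
      rw [h1]
      calc |inner ℝ (EuclideanSpace.single i (1:ℝ)) v|
          ≤ ‖(EuclideanSpace.single i (1:ℝ) : EuclideanSpace ℝ (Fin N))‖ * ‖v‖ := abs_real_inner_le_norm _ _
        _ = ‖v‖ := by rw [EuclideanSpace.norm_single]; simp
    calc ‖fderiv ℝ u x v‖
        = |∑ i : Fin N, v i * fderiv ℝ u x (EuclideanSpace.single i 1)| := by
          rw [Real.norm_eq_abs]
          congr 1
          conv_lhs => rw [hv]
          rw [map_sum]
          congr 1
          ext i
          simp
      _ ≤ ∑ i : Fin N, |v i * fderiv ℝ u x (EuclideanSpace.single i 1)| :=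
          Finset.abs_sum_le_sum_abs _ _
      _ ≤ ∑ i : Fin N, |fderiv ℝ u x (EuclideanSpace.single i 1)| * ‖v‖ := by
          apply Finset.sum_le_sum
          intro i _
          rw [abs_mul, mul_comm]
          exact mul_le_mul_of_nonneg_left (hvi i) (abs_nonneg _)
      _ = (∑ i : Fin N, |fderiv ℝ u x (EuclideanSpace.single i 1)|) * ‖v‖ := by
          rw [Finset.sum_mul]
  have hmeas : ∀ i : Fin N, AEStronglyMeasurable
      (fun x : EuclideanSpace ℝ (Fin N) => |fderiv ℝ u x (EuclideanSpace.single i 1)|) volume := by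
    intro i
    apply Continuous.aestronglyMeasurable
    exact ((hu.continuous_fderiv (by simp)).clm_apply continuous_const).abs
  calc eLpNorm (fun x => fderiv ℝ u x) p volume
      ≤ eLpNorm (fun x : EuclideanSpace ℝ (Fin N) => ∑ i : Fin N, |fderiv ℝ u x (EuclideanSpace.single i 1)|)
          p volume := eLpNorm_mono_real hpt
    _ = eLpNorm (∑ i : Fin N,
          fun x : EuclideanSpace ℝ (Fin N) => |fderiv ℝ u x (EuclideanSpace.single i 1)|) p volume := by
        congr 1
        ext x
        simp [Finset.sum_apply]
    _ ≤ ∑ i : Fin N, eLpNorm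
          (fun x : EuclideanSpace ℝ (Fin N) => |fderiv ℝ u x (EuclideanSpace.single i 1)|) p volume :=
        eLpNorm_sum_le (fun i _ => hmeas i) hp
    _ = ∑ i : Fin N, eLpNorm
          (fun x : EuclideanSpace ℝ (Fin N) => fderiv ℝ u x (EuclideanSpace.single i 1)) p volume := by
        apply Finset.sum_congr rfl
        intro i _
        apply eLpNorm_congr_norm_ae
        apply Filter.Eventually.of_forall
        intro x
        simp [Real.norm_eq_abs, abs_abs]
    _ ≤ ∑ _i : Fin N, 3 * D ^ ((1:ℝ)/2) * B ^ ((1:ℝ)/2) :=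
        Finset.sum_le_sum fun i _ => hdir i
    _ = (N : ℝ≥0∞) * (3 * D ^ ((1:ℝ)/2) * B ^ ((1:ℝ)/2)) := by
        rw [Finset.sum_const, Finset.card_univ, Fintype.card_fin, nsmul_eq_mul]
    _ = ((3 * N : ℝ≥0) : ℝ≥0∞) * D ^ ((1:ℝ)/2) * B ^ ((1:ℝ)/2) := by
        push_cast
        ring
end

section
/- Fix x ∈ R^N, h > 0, and u : R^N → R continuous. Among all pairs (G, H) with G ∈ R^N and H ∈ Sym(R^{N×N}) minimizing (1/2)∫_{hS^{N-1}} (u(x+z) - u(x) - Gᵀz - (1/2)zᵀHz)² dH^{N-1}(z), the Hessian part of the minimizer is given explicitly by H' = (1/2) C₁₂^{-1} h^{-(N-1)} ∫_{hS^{N-1}} ((u(x+z) - 2u(x) + u(x-z))/|z|²) (zzᵀ/|z|² − I/(N+2)) dH^{N-1}(z), where C₁₂ = |S^{N-1}|/(N(N+2)). -/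
/-!
The Hessian part of a minimizer is characterised by the normal equations: the residual is
orthogonal to every monomial `z_p z_q`. The measure `μH[N-1]` restricted to the sphere is invariant
under linear isometries, so odd moments vanish (the gradient part decouples) and, since a
reflection exchanges any two vectors of equal norm, the law of `⟪w, z⟫` depends only on `‖w‖`.
Polarization then gives the fourth moments
`∫ ⟪a,z⟫⟪b,z⟫⟪c,z⟫⟪d,z⟫ = C (⟪a,b⟫⟪c,d⟫ + ⟪a,c⟫⟪b,d⟫ + ⟪a,d⟫⟪b,c⟫)`, and summing over an
orthonormal basis against `∫ ‖z‖⁴ = r⁴ |S_r|` gives `C = r⁴ |S_r| / (N (N + 2))`. The normal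
equations become `∫ f z_p z_q = (C / 2) (tr H δ_pq + 2 H_pq)`; their trace determines `tr H`, so
they can be solved for `H`, and symmetrizing under `z ↦ -z` turns `f` into the second difference.
-/

open MeasureTheory Metric Module
open scoped RealInnerProductSpace Pointwise

theorem integral_mul_eq_zero_of_forall_integral_sq_le {α : Type*} [MeasurableSpace α]
    {μ : Measure α} {f g : α → ℝ} (hf : Integrable (fun x => f x ^ 2) μ)
    (hfg : Integrable (fun x => f x * g x) μ) (hg : Integrable (fun x => g x ^ 2) μ)
    (hmin : ∀ t : ℝ, ∫ x, f x ^ 2 ∂μ ≤ ∫ x, (f x - t * g x) ^ 2 ∂μ) :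
    ∫ x, f x * g x ∂μ = 0 := by
  have hexpand : ∀ t : ℝ, ∫ x, (f x - t * g x) ^ 2 ∂μ
      = ∫ x, f x ^ 2 ∂μ + (-2 * t) * ∫ x, f x * g x ∂μ + t ^ 2 * ∫ x, g x ^ 2 ∂μ := fun t => by
    have hpoint : (fun x => (f x - t * g x) ^ 2)
        = fun x => f x ^ 2 + (-2 * t) * (f x * g x) + t ^ 2 * g x ^ 2 := by
      ext x; ring
    rw [hpoint, integral_add, integral_add hf (hfg.const_mul _), integral_const_mul,
      integral_const_mul]
    · exact hf.add (hfg.const_mul _)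
    · exact hg.const_mul _
  have hdisc := discrim_le_zero fun t => by
    have := hmin t
    rw [hexpand] at this
    show 0 ≤ (∫ x, g x ^ 2 ∂μ) * (t * t) + (-2 * ∫ x, f x * g x ∂μ) * t + 0
    nlinarith
  rw [discrim] at hdisc
  nlinarith [sq_nonneg (∫ x, f x * g x ∂μ)]

theorem measure_lt_top_of_integrableOn_sq {α : Type*} [MeasurableSpace α] {μ : Measure α}
    {s : Set α} {f : α → ℝ} {c : ℝ} (hc : c ≠ 0)
    (hadd : IntegrableOn (fun x => (f x + c) ^ 2) s μ)
    (hsub : IntegrableOn (fun x => (f x - c) ^ 2) s μ) : μ s < ⊤ := by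
  have h := (hadd.add hsub).measure_norm_ge_lt_top (ε := 2 * c ^ 2) (by positivity)
  have huniv : {x | 2 * c ^ 2 ≤ ‖(f x + c) ^ 2 + (f x - c) ^ 2‖} = Set.univ :=
    Set.eq_univ_of_forall fun x => by
      rw [Set.mem_ofPred_eq, Real.norm_of_nonneg (by positivity)]
      nlinarith [sq_nonneg (f x)]
  rwa [Pi.add_def, huniv, Measure.restrict_apply_univ] at h

section HausdorffSphere

variable {E : Type*} [NormedAddCommGroup E] [InnerProductSpace ℝ E] [MeasurableSpace E]
  [BorelSpace E]

theorem hausdorffMeasure_sphere {d r : ℝ} (hd : 0 ≤ d) (hr : 0 < r) :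
    μH[d] (sphere (0 : E) r) = ENNReal.ofReal (r ^ d) * μH[d] (sphere (0 : E) 1) := by
  have hs : r • sphere (0 : E) 1 = sphere 0 r := by
    rw [smul_sphere' hr.ne', smul_zero, Real.norm_of_nonneg hr.le, mul_one]
  rw [← hs, Measure.hausdorffMeasure_smul₀ hd hr.ne', ENNReal.smul_def, smul_eq_mul,
    ← ENNReal.ofReal_coe_nnreal, NNReal.coe_rpow, coe_nnnorm, Real.norm_of_nonneg hr.le]

/-- The orthogonal projection onto a hyperplane is 1-Lipschitz and maps the sphere of radius `r`
onto the closed ball of radius `r` of the hyperplane. -/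
theorem hausdorffMeasure_sphere_pos [FiniteDimensional ℝ E] [Nontrivial E] {r : ℝ}
    (hr : 0 < r) : 0 < μH[(finrank ℝ E : ℝ) - 1] (sphere (0 : E) r) := by
  obtain ⟨v, hv⟩ : ∃ v : E, ‖v‖ = 1 := exists_norm_eq E zero_le_one
  have hv0 : v ≠ 0 := by rintro rfl; simp at hv
  set K := (ℝ ∙ v)ᗮ
  have : Fact (finrank ℝ E = (finrank ℝ E - 1) + 1) :=
    ⟨by have := finrank_pos (R := ℝ) (M := E); omega⟩
  have hK : ((finrank ℝ K : ℕ) : ℝ) = (finrank ℝ E : ℝ) - 1 := by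
    rw [Submodule.finrank_orthogonal_span_singleton (n := finrank ℝ E - 1) hv0,
      Nat.cast_sub finrank_pos, Nat.cast_one]
  have hball : ball (0 : K) r ⊆ K.orthogonalProjectionOnto '' sphere 0 r := by
    intro y hy
    have hy' : ‖(y : E)‖ < r := by simpa using hy
    have hyv : ⟪(y : E), v⟫ = 0 := Submodule.mem_orthogonal_singleton_iff_inner_left.1 y.2
    refine ⟨(y : E) + √(r ^ 2 - ‖(y : E)‖ ^ 2) • v, ?_, ?_⟩
    · have hnorm : ‖(y : E) + √(r ^ 2 - ‖(y : E)‖ ^ 2) • v‖ ^ 2 = r ^ 2 := by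
        rw [sq, norm_add_sq_eq_norm_sq_add_norm_sq_real (by rw [inner_smul_right, hyv, mul_zero]),
          ← sq, ← sq, norm_smul, hv, mul_one, Real.norm_eq_abs, sq_abs,
          Real.sq_sqrt (by nlinarith [norm_nonneg (y : E)])]
        ring
      rw [mem_sphere_zero_iff_norm]
      nlinarith [norm_nonneg ((y : E) + √(r ^ 2 - ‖(y : E)‖ ^ 2) • v)]
    · rw [map_add, map_smul, K.orthogonalProjectionOnto_mem_subspace_eq_self,
        Submodule.orthogonalProjectionOnto_orthogonalComplement_singleton_eq_zero, smul_zero,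
        add_zero]
  calc (0 : ENNReal) < μH[(finrank ℝ K : ℝ)] (ball (0 : K) r) :=
        isOpen_ball.measure_pos _ (nonempty_ball.2 hr)
    _ ≤ μH[(finrank ℝ K : ℝ)] (K.orthogonalProjectionOnto '' sphere 0 r) := measure_mono hball
    _ ≤ μH[(finrank ℝ E : ℝ) - 1] (sphere (0 : E) r) := by
      rw [← hK]
      exact hausdorffMeasure_orthogonalProjectionOnto_le K _ _ (Nat.cast_nonneg _)

end HausdorffSphere

structure IsIsotropicSphereMeasure {E : Type*} [NormedAddCommGroup E] [InnerProductSpace ℝ E]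
    [MeasurableSpace E] (ν : Measure E) (r : ℝ) : Prop where
  isFiniteMeasure : IsFiniteMeasure ν
  norm_eq_ae : ∀ᵐ z ∂ν, ‖z‖ = r
  measurePreserving : ∀ e : E ≃ₗᵢ[ℝ] E, MeasurePreserving e ν ν

theorem isIsotropicSphereMeasure_restrict_sphere {E : Type*} [NormedAddCommGroup E]
    [InnerProductSpace ℝ E] [MeasurableSpace E] [BorelSpace E] {d r : ℝ}
    (hfin : μH[d] (sphere (0 : E) r) ≠ ⊤) :
    IsIsotropicSphereMeasure (μH[d].restrict (sphere (0 : E) r)) r where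
  isFiniteMeasure := isFiniteMeasure_restrict.2 hfin
  norm_eq_ae := by
    filter_upwards [ae_restrict_mem isClosed_sphere.measurableSet] with z hz
    exact mem_sphere_zero_iff_norm.1 hz
  measurePreserving e := by
    have h := (e.toIsometryEquiv.measurePreserving_hausdorffMeasure d).restrict_preimage
      (s := sphere (0 : E) r) isClosed_sphere.measurableSet
    have hpre : e.toIsometryEquiv ⁻¹' sphere (0 : E) r = sphere 0 r := by ext z; simp
    rwa [hpre] at h

theorem sum_mul_self_eq_norm_sq {ι : Type*} [Fintype ι] (z : EuclideanSpace ℝ ι) :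
    ∑ k, z k * z k = ‖z‖ ^ 2 := by
  rw [EuclideanSpace.norm_sq_eq]
  simp only [Real.norm_eq_abs, sq_abs, ← sq]

namespace IsIsotropicSphereMeasure

section InnerProductSpace

variable {E : Type*} [NormedAddCommGroup E] [InnerProductSpace ℝ E] [MeasurableSpace E]
  {ν : Measure E} {r : ℝ}

theorem integral_norm_pow_four (hν : IsIsotropicSphereMeasure ν r) :
    ∫ z, ‖z‖ ^ 4 ∂ν = r ^ 4 * ν.real Set.univ := by
  rw [integral_congr_ae (hν.norm_eq_ae.mono fun z hz => by rw [hz]), integral_const, smul_eq_mul,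
    mul_comm]

variable [BorelSpace E]

theorem integral_comp (hν : IsIsotropicSphereMeasure ν r) (e : E ≃ₗᵢ[ℝ] E) (f : E → ℝ) :
    ∫ z, f (e z) ∂ν = ∫ z, f z ∂ν :=
  (hν.measurePreserving e).integral_comp e.toHomeomorph.measurableEmbedding f

theorem integral_comp_neg (hν : IsIsotropicSphereMeasure ν r) (f : E → ℝ) :
    ∫ z, f (-z) ∂ν = ∫ z, f z ∂ν :=
  hν.integral_comp (LinearIsometryEquiv.neg ℝ) f

theorem integral_comp_inner_eq_of_norm_eq (hν : IsIsotropicSphereMeasure ν r) (g : ℝ → ℝ)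
    {u w : E} (h : ‖u‖ = ‖w‖) : ∫ z, g ⟪u, z⟫ ∂ν = ∫ z, g ⟪w, z⟫ ∂ν := by
  set e := (ℝ ∙ (u - w))ᗮ.reflection
  have he : ∀ z, ⟪w, z⟫ = ⟪u, e z⟫ := fun z => by
    rw [← Submodule.reflection_sub h, ← e.inner_map_map, Submodule.reflection_reflection]
  simp_rw [he]
  exact (hν.integral_comp e fun z => g ⟪u, z⟫).symm

theorem integral_inner_pow_four_eq_norm_pow_four_mul (hν : IsIsotropicSphereMeasure ν r) {u : E}
    (hu : ‖u‖ = 1) (w : E) : ∫ z, ⟪w, z⟫ ^ 4 ∂ν = ‖w‖ ^ 4 * ∫ z, ⟪u, z⟫ ^ 4 ∂ν := by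
  have hnorm : ‖w‖ = ‖‖w‖ • u‖ := by rw [norm_smul, hu, norm_norm, mul_one]
  rw [hν.integral_comp_inner_eq_of_norm_eq (· ^ 4) hnorm, ← integral_const_mul]
  simp_rw [inner_smul_left, mul_pow]
  rfl

section Proper

variable [ProperSpace E]

theorem integrable_of_continuous (hν : IsIsotropicSphereMeasure ν r) {f : E → ℝ}
    (hf : Continuous f) : Integrable f ν := by
  have := hν.isFiniteMeasure
  obtain ⟨C, hC⟩ := (isCompact_sphere (0 : E) r).exists_bound_of_continuousOn hf.continuousOn
  refine Integrable.of_bound hf.aestronglyMeasurable C ?_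
  filter_upwards [hν.norm_eq_ae] with z hz
  exact hC z (mem_sphere_zero_iff_norm.2 hz)

theorem integral_inner_sq_mul_inner_sq (hν : IsIsotropicSphereMeasure ν r) {u : E}
    (hu : ‖u‖ = 1) (a b : E) :
    ∫ z, ⟪a, z⟫ ^ 2 * ⟪b, z⟫ ^ 2 ∂ν
      = (∫ z, ⟪u, z⟫ ^ 4 ∂ν) / 3 * (‖a‖ ^ 2 * ‖b‖ ^ 2 + 2 * ⟪a, b⟫ ^ 2) := by
  have hpol : ∀ z, ⟪a, z⟫ ^ 2 * ⟪b, z⟫ ^ 2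
      = (⟪a + b, z⟫ ^ 4 + ⟪a - b, z⟫ ^ 4 - 2 * ⟪a, z⟫ ^ 4 - 2 * ⟪b, z⟫ ^ 4) / 12 := fun z => by
    rw [inner_add_left, inner_sub_left]; ring
  simp_rw [hpol]
  rw [integral_div, integral_sub, integral_sub, integral_add, integral_const_mul,
    integral_const_mul]
  · rw [hν.integral_inner_pow_four_eq_norm_pow_four_mul hu (a + b),
      hν.integral_inner_pow_four_eq_norm_pow_four_mul hu (a - b),
      hν.integral_inner_pow_four_eq_norm_pow_four_mul hu a,
      hν.integral_inner_pow_four_eq_norm_pow_four_mul hu b]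
    have h4 : ∀ c : E, ‖c‖ ^ 4 = (‖c‖ ^ 2) ^ 2 := fun c => by ring
    rw [h4 (a + b), h4 (a - b), h4 a, h4 b, norm_add_sq_real, norm_sub_sq_real]
    ring
  all_goals exact hν.integrable_of_continuous (by fun_prop)

theorem integral_inner_mul_inner_mul_inner_mul_inner (hν : IsIsotropicSphereMeasure ν r)
    {u : E} (hu : ‖u‖ = 1) (a b c d : E) :
    ∫ z, ⟪a, z⟫ * ⟪b, z⟫ * ⟪c, z⟫ * ⟪d, z⟫ ∂ν
      = (∫ z, ⟪u, z⟫ ^ 4 ∂ν) / 3 * (⟪a, b⟫ * ⟪c, d⟫ + ⟪a, c⟫ * ⟪b, d⟫ + ⟪a, d⟫ * ⟪b, c⟫) := by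
  have hpol : ∀ z, ⟪a, z⟫ * ⟪b, z⟫ * ⟪c, z⟫ * ⟪d, z⟫
      = (⟪a + b, z⟫ ^ 2 * ⟪c + d, z⟫ ^ 2 - ⟪a + b, z⟫ ^ 2 * ⟪c - d, z⟫ ^ 2
        - (⟪a - b, z⟫ ^ 2 * ⟪c + d, z⟫ ^ 2 - ⟪a - b, z⟫ ^ 2 * ⟪c - d, z⟫ ^ 2)) / 16 :=
    fun z => by simp only [inner_add_left, inner_sub_left]; ring
  simp_rw [hpol]
  rw [integral_div, integral_sub, integral_sub, integral_sub]
  · rw [hν.integral_inner_sq_mul_inner_sq hu, hν.integral_inner_sq_mul_inner_sq hu,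
      hν.integral_inner_sq_mul_inner_sq hu, hν.integral_inner_sq_mul_inner_sq hu]
    simp only [norm_add_sq_real, norm_sub_sq_real, inner_add_left, inner_sub_left,
      inner_add_right, inner_sub_right, real_inner_comm b a, real_inner_comm d c]
    ring
  all_goals exact hν.integrable_of_continuous (by fun_prop)

end Proper

theorem integral_inner_pow_four_of_norm_eq_one [FiniteDimensional ℝ E]
    (hν : IsIsotropicSphereMeasure ν r) {u : E} (hu : ‖u‖ = 1) :
    ∫ z, ⟪u, z⟫ ^ 4 ∂ν = 3 * (r ^ 4 * ν.real Set.univ / (finrank ℝ E * (finrank ℝ E + 2))) := by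
  set n := finrank ℝ E
  have hn : (0 : ℝ) < n := by
    have : u ≠ 0 := by rintro rfl; simp at hu
    exact_mod_cast finrank_pos_iff_exists_ne_zero.2 ⟨u, this⟩
  set b := stdOrthonormalBasis ℝ E
  have hsq : ∀ z : E, ‖z‖ ^ 4 = ∑ i, ∑ j, ⟪b i, z⟫ ^ 2 * ⟪b j, z⟫ ^ 2 := fun z => by
    rw [← Finset.sum_mul_sum, ← sq, show ‖z‖ ^ 4 = (‖z‖ ^ 2) ^ 2 by ring,
      ← real_inner_self_eq_norm_sq, ← b.sum_inner_mul_inner z z]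
    simp only [real_inner_comm z, ← sq]
  have hbb : ∀ i j, ⟪b i, b j⟫ = if i = j then 1 else 0 := orthonormal_iff_ite.1 b.orthonormal
  have hsum : ∫ z, ‖z‖ ^ 4 ∂ν = (∫ z, ⟪u, z⟫ ^ 4 ∂ν) / 3 * (n * (n + 2)) := by
    simp_rw [hsq]
    rw [integral_finsetSum _ fun i _ => hν.integrable_of_continuous (by fun_prop),
      Finset.sum_congr rfl fun i _ => integral_finsetSum _ fun j _ =>
        hν.integrable_of_continuous (by fun_prop)]
    simp only [hν.integral_inner_sq_mul_inner_sq hu, b.orthonormal.1 _, hbb]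
    simp [Finset.sum_add_distrib, ← Finset.mul_sum, n]
    ring
  rw [hν.integral_norm_pow_four] at hsum
  field_simp
  linarith

end InnerProductSpace

section Coordinates

variable {ι : Type*} [Fintype ι] {ν : Measure (EuclideanSpace ℝ ι)} {r : ℝ}

theorem integral_coord_mul_coord_mul_coord_eq_zero (hν : IsIsotropicSphereMeasure ν r)
    (k p q : ι) : ∫ z, z k * (z p * z q) ∂ν = 0 := by
  have h := hν.integral_comp_neg fun z => z k * (z p * z q)
  simp only [PiLp.neg_apply, neg_mul, mul_neg, neg_neg, integral_neg] at h
  linarith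

theorem integral_coord_mul_coord_mul_coord_mul_coord [DecidableEq ι]
    (hν : IsIsotropicSphereMeasure ν r) (k l p q : ι) :
    ∫ z, z k * z l * z p * z q ∂ν
      = r ^ 4 * ν.real Set.univ / (Fintype.card ι * (Fintype.card ι + 2))
        * ((if k = l then 1 else 0) * (if p = q then 1 else 0)
          + (if k = p then 1 else 0) * (if l = q then 1 else 0)
          + (if k = q then 1 else 0) * (if l = p then 1 else 0)) := by
  have hu : ‖EuclideanSpace.single k (1 : ℝ)‖ = 1 := by simp
  have hcoord : ∀ (i : ι) (z : EuclideanSpace ℝ ι), z i = ⟪EuclideanSpace.single i 1, z⟫ :=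
    fun i z => by simp [EuclideanSpace.inner_single_left]
  simp_rw [hcoord k, hcoord l, hcoord p, hcoord q]
  rw [hν.integral_inner_mul_inner_mul_inner_mul_inner hu,
    hν.integral_inner_pow_four_of_norm_eq_one hu, finrank_euclideanSpace]
  simp only [EuclideanSpace.inner_single_left, PiLp.single_apply, map_one, one_mul]
  ring

theorem integral_quadraticForm_mul_coord_mul_coord [DecidableEq ι]
    (hν : IsIsotropicSphereMeasure ν r) (H : Matrix ι ι ℝ) (p q : ι) :
    ∫ z, (∑ k, ∑ l, z k * H k l * z l) * (z p * z q) ∂ν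
      = r ^ 4 * ν.real Set.univ / (Fintype.card ι * (Fintype.card ι + 2))
        * ((if p = q then H.trace else 0) + H p q + H q p) := by
  have hexpand : ∀ z : EuclideanSpace ℝ ι, (∑ k, ∑ l, z k * H k l * z l) * (z p * z q)
      = ∑ k, ∑ l, H k l * (z k * z l * z p * z q) := fun z => by
    simp only [Finset.sum_mul]
    exact Finset.sum_congr rfl fun k _ => Finset.sum_congr rfl fun l _ => by ring
  simp_rw [hexpand]
  rw [integral_finsetSum _ fun k _ => hν.integrable_of_continuous (by fun_prop),
    Finset.sum_congr rfl fun k _ => integral_finsetSum _ fun l _ =>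
      hν.integrable_of_continuous (by fun_prop)]
  simp only [integral_const_mul, hν.integral_coord_mul_coord_mul_coord_mul_coord]
  set C := r ^ 4 * ν.real Set.univ / (Fintype.card ι * (Fintype.card ι + 2))
  simp [mul_add, Finset.sum_add_distrib, Finset.sum_ite_eq, Finset.sum_ite_eq', Matrix.trace,
    ← Finset.sum_mul]
  split_ifs <;> ring

theorem integral_mul_sum_coord_mul_coord (hν : IsIsotropicSphereMeasure ν r)
    (f : EuclideanSpace ℝ ι → ℝ) : ∫ z, f z * ∑ k, z k * z k ∂ν = r ^ 2 * ∫ z, f z ∂ν := by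
  rw [← integral_const_mul]
  refine integral_congr_ae (hν.norm_eq_ae.mono fun z hz => ?_)
  simp only [sum_mul_self_eq_norm_sq, hz, mul_comm]

theorem integral_secondDifference_mul [DecidableEq ι] (hν : IsIsotropicSphereMeasure ν r)
    (hr : r ≠ 0) {f : EuclideanSpace ℝ ι → ℝ} (hf : Continuous f) (p q : ι) :
    ∫ z, (f z + f (-z)) / ‖z‖ ^ 2
        * (z p * z q / ‖z‖ ^ 2 - (if p = q then (1 : ℝ) else 0) / (Fintype.card ι + 2)) ∂ν
      = 2 / r ^ 4
        * ∫ z, f z * (z p * z q - (if p = q then r ^ 2 / (Fintype.card ι + 2) else 0)) ∂ν := by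
  set g : EuclideanSpace ℝ ι → ℝ :=
    fun z => z p * z q - (if p = q then r ^ 2 / (Fintype.card ι + 2) else 0)
  have hg : ∀ z, g (-z) = g z := fun z => by simp [g]
  have hae : ∀ᵐ z ∂ν, (f z + f (-z)) / ‖z‖ ^ 2
      * (z p * z q / ‖z‖ ^ 2 - (if p = q then (1 : ℝ) else 0) / (Fintype.card ι + 2))
        = (f z * g z + f (-z) * g (-z)) / r ^ 4 := by
    filter_upwards [hν.norm_eq_ae] with z hz
    rw [hz, hg]
    simp only [g]
    split_ifs
    · field_simp
    · field_simp
      ring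
  rw [integral_congr_ae hae, integral_div, integral_add
    (hν.integrable_of_continuous (by fun_prop)) (hν.integrable_of_continuous (by fun_prop)),
    hν.integral_comp_neg fun z => f z * g z]
  ring

end Coordinates

end IsIsotropicSphereMeasure

noncomputable def quadraticResidual {ι : Type*} [Fintype ι] (f : EuclideanSpace ℝ ι → ℝ)
    (G : ι → ℝ) (H : Matrix ι ι ℝ) (z : EuclideanSpace ℝ ι) : ℝ :=
  f z - ∑ k, G k * z k - 1 / 2 * ∑ k, ∑ l, z k * H k l * z l

theorem quadraticResidual_add_smul {ι : Type*} [Fintype ι] (f : EuclideanSpace ℝ ι → ℝ)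
    (G : ι → ℝ) (H S : Matrix ι ι ℝ) (t : ℝ) (z : EuclideanSpace ℝ ι) :
    quadraticResidual f G (H + t • S) z
      = quadraticResidual f G H z - t / 2 * ∑ k, ∑ l, z k * S k l * z l := by
  have hsum : ∑ k, ∑ l, z k * (H + t • S) k l * z l
      = ∑ k, ∑ l, z k * H k l * z l + t * ∑ k, ∑ l, z k * S k l * z l := by
    simp only [Finset.mul_sum, ← Finset.sum_add_distrib, Matrix.add_apply, Matrix.smul_apply,
      smul_eq_mul]
    exact Finset.sum_congr rfl fun k _ => Finset.sum_congr rfl fun l _ => by ring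
  rw [quadraticResidual, quadraticResidual, hsum]
  ring

/-- On the sphere, shifting the Hessian by `± 1` shifts the residual by the constant `∓ r² / 2`. -/
theorem measure_sphere_lt_top_of_integrableOn {ι : Type*} [Fintype ι] [DecidableEq ι]
    {μ : Measure (EuclideanSpace ℝ ι)} {r : ℝ} (hr : r ≠ 0) (f : EuclideanSpace ℝ ι → ℝ)
    (G : ι → ℝ) (H : Matrix ι ι ℝ)
    (hint : ∀ Hm : Matrix ι ι ℝ,
      IntegrableOn (fun z => quadraticResidual f G Hm z ^ 2) (sphere 0 r) μ) :
    μ (sphere 0 r) < ⊤ := by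
  have hshift : ∀ t : ℝ, ∀ z ∈ sphere (0 : EuclideanSpace ℝ ι) r,
      quadraticResidual f G (H + t • 1) z = quadraticResidual f G H z - t * (r ^ 2 / 2) := by
    intro t z hz
    rw [quadraticResidual_add_smul, ← mem_sphere_zero_iff_norm.1 hz]
    simp [Matrix.one_apply, sum_mul_self_eq_norm_sq]
    ring
  refine measure_lt_top_of_integrableOn_sq (f := quadraticResidual f G H) (c := r ^ 2 / 2)
    (by positivity)
    ((hint (H + (-1 : ℝ) • 1)).congr_fun (fun z hz => ?_) isClosed_sphere.measurableSet)
    ((hint (H + (1 : ℝ) • 1)).congr_fun (fun z hz => ?_) isClosed_sphere.measurableSet)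
  all_goals simp only [hshift _ z hz]; ring

namespace IsIsotropicSphereMeasure

variable {ι : Type*} [Fintype ι] [DecidableEq ι] {ν : Measure (EuclideanSpace ℝ ι)} {r : ℝ}

theorem integral_quadraticResidual_mul_coord_mul_coord_eq_zero
    (hν : IsIsotropicSphereMeasure ν r) {f : EuclideanSpace ℝ ι → ℝ} (hf : Continuous f)
    (G : ι → ℝ) {H : Matrix ι ι ℝ} (hH : H.IsSymm)
    (hmin : ∀ Hm : Matrix ι ι ℝ, Hm.IsSymm →
      ∫ z, quadraticResidual f G H z ^ 2 ∂ν ≤ ∫ z, quadraticResidual f G Hm z ^ 2 ∂ν)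
    (p q : ι) : ∫ z, quadraticResidual f G H z * (z p * z q) ∂ν = 0 := by
  set S : Matrix ι ι ℝ := Matrix.single p q 1 + Matrix.single q p 1
  have hS : S.IsSymm := by
    simp only [S, Matrix.IsSymm, Matrix.transpose_add, Matrix.transpose_single, add_comm]
  have hshift : ∀ (t : ℝ) (z : EuclideanSpace ℝ ι),
      quadraticResidual f G (H + t • S) z = quadraticResidual f G H z - t * (z p * z q) :=
    fun t z => by
      rw [quadraticResidual_add_smul]
      simp [S, Matrix.single_apply, mul_add, add_mul, Finset.sum_add_distrib, ite_and]
      ring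
  have hcont : Continuous (quadraticResidual f G H) := by unfold quadraticResidual; fun_prop
  refine integral_mul_eq_zero_of_forall_integral_sq_le
    (hν.integrable_of_continuous (by fun_prop)) (hν.integrable_of_continuous (by fun_prop))
    (hν.integrable_of_continuous (by fun_prop))
    fun t => (hmin _ (hH.add (hS.smul t))).trans_eq ?_
  simp_rw [hshift]

theorem integral_mul_coord_mul_coord_of_integral_quadraticResidual_mul_eq_zero
    (hν : IsIsotropicSphereMeasure ν r) {f : EuclideanSpace ℝ ι → ℝ} (hf : Continuous f)
    (G : ι → ℝ) {H : Matrix ι ι ℝ} (hH : H.IsSymm) {p q : ι}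
    (horth : ∫ z, quadraticResidual f G H z * (z p * z q) ∂ν = 0) :
    ∫ z, f z * (z p * z q) ∂ν
      = r ^ 4 * ν.real Set.univ / (Fintype.card ι * (Fintype.card ι + 2)) / 2
        * ((if p = q then H.trace else 0) + 2 * H p q) := by
  have hsplit : ∀ z : EuclideanSpace ℝ ι, quadraticResidual f G H z * (z p * z q)
      = f z * (z p * z q) - ∑ k, G k * (z k * (z p * z q))
        - 1 / 2 * ((∑ k, ∑ l, z k * H k l * z l) * (z p * z q)) := fun z => by
    rw [quadraticResidual, sub_mul, sub_mul, Finset.sum_mul, mul_assoc]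
    simp only [mul_assoc]
  simp_rw [hsplit] at horth
  rw [integral_sub, integral_sub, integral_finsetSum, integral_const_mul,
    hν.integral_quadraticForm_mul_coord_mul_coord] at horth
  · simp only [integral_const_mul, hν.integral_coord_mul_coord_mul_coord_eq_zero, mul_zero,
      Finset.sum_const_zero, sub_zero, hH.apply p q] at horth
    linear_combination horth
  all_goals first
    | exact hν.integrable_of_continuous (by fun_prop)
    | exact fun k _ => hν.integrable_of_continuous (by fun_prop)

theorem hessian_eq_of_forall_integral_quadraticResidual_mul_eq_zero [NeZero ν]
    (hν : IsIsotropicSphereMeasure ν r) (hr : r ≠ 0) {f : EuclideanSpace ℝ ι → ℝ}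
    (hf : Continuous f) (G : ι → ℝ) {H : Matrix ι ι ℝ} (hH : H.IsSymm)
    (horth : ∀ p q, ∫ z, quadraticResidual f G H z * (z p * z q) ∂ν = 0) (p q : ι) :
    H p q = (r ^ 4 * ν.real Set.univ / (Fintype.card ι * (Fintype.card ι + 2)))⁻¹
      * ∫ z, f z * (z p * z q - (if p = q then r ^ 2 / (Fintype.card ι + 2) else 0)) ∂ν := by
  set n : ℝ := (Fintype.card ι : ℝ)
  set C := r ^ 4 * ν.real Set.univ / (n * (n + 2))
  have := hν.isFiniteMeasure
  have hn : 0 < n := by simpa [n] using Fintype.card_pos_iff.2 ⟨p⟩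
  have hC : C ≠ 0 := by have := measureReal_univ_pos (μ := ν); positivity
  have hmoment : ∀ p q, ∫ z, f z * (z p * z q) ∂ν
      = C / 2 * ((if p = q then H.trace else 0) + 2 * H p q) := fun p q =>
    hν.integral_mul_coord_mul_coord_of_integral_quadraticResidual_mul_eq_zero hf G hH (horth p q)
  have htrace : r ^ 2 * ∫ z, f z ∂ν = C / 2 * (n + 2) * H.trace := by
    rw [← hν.integral_mul_sum_coord_mul_coord]
    simp_rw [Finset.mul_sum]
    rw [integral_finsetSum _ fun k _ => hν.integrable_of_continuous (by fun_prop)]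
    simp only [hmoment, if_true, ← Finset.mul_sum, Finset.sum_add_distrib, Finset.sum_const,
      Finset.card_univ, nsmul_eq_mul]
    simp only [Matrix.trace, Matrix.diag, n]
    ring
  simp_rw [mul_sub]
  rw [integral_sub (hν.integrable_of_continuous (by fun_prop))
    (hν.integrable_of_continuous (by fun_prop)), integral_mul_const, hmoment]
  split_ifs
  · field_simp
    linear_combination 2 * htrace
  · field_simp
    ring

end IsIsotropicSphereMeasure

theorem implicit_nonlocal_hessian_on_sphere_general (N : ℕ)
    (x : EuclideanSpace ℝ (Fin N)) (h : ℝ) (hh : 0 < h)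
    (u : EuclideanSpace ℝ (Fin N) → ℝ) (hu : Continuous u)
    (hint : ∀ (G : Fin N → ℝ) (Hm : Matrix (Fin N) (Fin N) ℝ),
      IntegrableOn (fun z : EuclideanSpace ℝ (Fin N) =>
          (u (x + z) - u x - (∑ i, G i * z i)
            - (1 / 2) * ∑ i, ∑ j, z i * Hm i j * z j) ^ 2)
        (sphere (0 : EuclideanSpace ℝ (Fin N)) h) μH[(N : ℝ) - 1])
    (G' : Fin N → ℝ) (H' : Matrix (Fin N) (Fin N) ℝ) (hsym : H'.IsSymm)
    (hmin : ∀ (G : Fin N → ℝ) (Hm : Matrix (Fin N) (Fin N) ℝ), Hm.IsSymm →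
      ((1 : ℝ) / 2) * (∫ z in sphere (0 : EuclideanSpace ℝ (Fin N)) h,
          (u (x + z) - u x - (∑ i, G' i * z i)
            - (1 / 2) * ∑ i, ∑ j, z i * H' i j * z j) ^ 2 ∂μH[(N : ℝ) - 1])
        ≤ ((1 : ℝ) / 2) * ∫ z in sphere (0 : EuclideanSpace ℝ (Fin N)) h,
            (u (x + z) - u x - (∑ i, G i * z i)
              - (1 / 2) * ∑ i, ∑ j, z i * Hm i j * z j) ^ 2 ∂μH[(N : ℝ) - 1]) :
    ∀ i j, H' i j
      = (1 / 2)
        * ((μH[(N : ℝ) - 1] (sphere (0 : EuclideanSpace ℝ (Fin N)) 1)).toReal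
            / ((N : ℝ) * ((N : ℝ) + 2)))⁻¹
        * (h ^ (N - 1))⁻¹
        * ∫ z in sphere (0 : EuclideanSpace ℝ (Fin N)) h,
            ((u (x + z) - 2 * u x + u (x - z)) / ‖z‖ ^ 2)
              * (z i * z j / ‖z‖ ^ 2 - (if i = j then (1 : ℝ) else 0) / ((N : ℝ) + 2))
            ∂μH[(N : ℝ) - 1] := by
  intro i j
  have hN : 1 ≤ N := Fin.pos i
  have : Nonempty (Fin N) := ⟨i⟩
  set f : EuclideanSpace ℝ (Fin N) → ℝ := fun z => u (x + z) - u x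
  have hf : Continuous f := by fun_prop
  have hν := isIsotropicSphereMeasure_restrict_sphere
    (measure_sphere_lt_top_of_integrableOn hh.ne' f G' H' (hint G')).ne
  have : NeZero (μH[(N : ℝ) - 1].restrict (sphere (0 : EuclideanSpace ℝ (Fin N)) h)) :=
    ⟨Measure.restrict_eq_zero.not.2 (by simpa using (hausdorffMeasure_sphere_pos
      (E := EuclideanSpace ℝ (Fin N)) hh).ne')⟩
  have horth := hν.integral_quadraticResidual_mul_coord_mul_coord_eq_zero hf G' hsym
    fun Hm hHm => le_of_mul_le_mul_left (hmin G' Hm hHm) one_half_pos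
  have hD : ∀ z, u (x + z) - 2 * u x + u (x - z) = f z + f (-z) := fun z => by
    simp only [f, sub_eq_add_neg]; ring
  have hsecond := hν.integral_secondDifference_mul hh.ne' hf i j
  rw [Fintype.card_fin] at hsecond
  rw [hν.hessian_eq_of_forall_integral_quadraticResidual_mul_eq_zero hh.ne' hf G' hsym horth i j]
  simp_rw [hD, hsecond, Fintype.card_fin, measureReal_restrict_apply_univ, measureReal_def]
  rw [hausdorffMeasure_sphere (by simpa using hN) hh, ENNReal.toReal_mul,
    ENNReal.toReal_ofReal (by positivity), ← Real.rpow_natCast h (N - 1), Nat.cast_sub hN,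
    Nat.cast_one]
  ring

/-- The Hessian part of any minimizer of the spherical least-squares problem
`min_{G, H symmetric} (1/2) ∫_{hS^{N-1}} (u(x+z) - u(x) - Gᵀz - (1/2) zᵀHz)² dH^{N-1}(z)`
is given explicitly by
`H' = (1/2) C₁₂⁻¹ h^{-(N-1)} ∫_{hS^{N-1}} ((u(x+z) - 2u(x) + u(x-z))/|z|²)
      (zzᵀ/|z|² − I/(N+2)) dH^{N-1}(z)`, where `C₁₂ = |S^{N-1}|/(N(N+2))`. -/
theorem implicit_nonlocal_hessian_on_sphere (N : ℕ) (hN : 1 ≤ N)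
    (x : EuclideanSpace ℝ (Fin N)) (h : ℝ) (hh : 0 < h)
    (u : EuclideanSpace ℝ (Fin N) → ℝ) (hu : Continuous u)
    (hint : ∀ (G : Fin N → ℝ) (Hm : Matrix (Fin N) (Fin N) ℝ),
      IntegrableOn (fun z : EuclideanSpace ℝ (Fin N) =>
          (u (x + z) - u x - (∑ i, G i * z i)
            - (1 / 2) * ∑ i, ∑ j, z i * Hm i j * z j) ^ 2)
        (sphere (0 : EuclideanSpace ℝ (Fin N)) h) μH[(N : ℝ) - 1])
    (G' : Fin N → ℝ) (H' : Matrix (Fin N) (Fin N) ℝ) (hsym : H'.IsSymm)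
    (hmin : ∀ (G : Fin N → ℝ) (Hm : Matrix (Fin N) (Fin N) ℝ), Hm.IsSymm →
      ((1 : ℝ) / 2) * (∫ z in sphere (0 : EuclideanSpace ℝ (Fin N)) h,
          (u (x + z) - u x - (∑ i, G' i * z i)
            - (1 / 2) * ∑ i, ∑ j, z i * H' i j * z j) ^ 2 ∂μH[(N : ℝ) - 1])
        ≤ ((1 : ℝ) / 2) * ∫ z in sphere (0 : EuclideanSpace ℝ (Fin N)) h,
            (u (x + z) - u x - (∑ i, G i * z i)
              - (1 / 2) * ∑ i, ∑ j, z i * Hm i j * z j) ^ 2 ∂μH[(N : ℝ) - 1]) :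
    ∀ i j, H' i j
      = (1 / 2)
        * ((μH[(N : ℝ) - 1] (sphere (0 : EuclideanSpace ℝ (Fin N)) 1)).toReal
            / ((N : ℝ) * ((N : ℝ) + 2)))⁻¹
        * (h ^ (N - 1))⁻¹
        * ∫ z in sphere (0 : EuclideanSpace ℝ (Fin N)) h,
            ((u (x + z) - 2 * u x + u (x - z)) / ‖z‖ ^ 2)
              * (z i * z j / ‖z‖ ^ 2 - (if i = j then (1 : ℝ) else 0) / ((N : ℝ) + 2))
            ∂μH[(N : ℝ) - 1] :=
  implicit_nonlocal_hessian_on_sphere_general N x h hh u hu hint G' H' hsym hmin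
end
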